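/- arXiv:2501.12462 — 5 statements merged into one kernel-verified Lean document; each statement's English description precedes it below -/
import Mathlib

section
/- The map Y_{a,b}: (x,y) ↦ (y - (a-b)/(x+y), x + (a-b)/(x+y)) (the Adler map) satisfies the parametric Yang–Baxter equation Y^{12}_{a,b} ∘ Y^{13}_{a,c} ∘ Y^{23}_{b,c} = Y^{23}_{b,c} ∘ Y^{13}_{a,c} ∘ Y^{12}_{a,b} for all parameters a,b,c, on the domain where all denominators are nonzero. -/
set_option maxHeartbeats 2000000


/-- The Adler map `Y_{a,b}(x,y) = (y - (a-b)/(x+y), x + (a-b)/(x+y))`. -/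
noncomputable def adler {K : Type*} [Field K] (a b : K) (p : K × K) : K × K :=
  (p.2 - (a - b) / (p.1 + p.2), p.1 + (a - b) / (p.1 + p.2))

/-- Action of a map `Y : X² → X²` on factors 1,2 of `X³`. -/
def act12 {X : Type*} (Y : X × X → X × X) (t : X × X × X) : X × X × X :=
  ((Y (t.1, t.2.1)).1, (Y (t.1, t.2.1)).2, t.2.2)

/-- Action of a map `Y : X² → X²` on factors 1,3 of `X³`. -/
def act13 {X : Type*} (Y : X × X → X × X) (t : X × X × X) : X × X × X :=
  ((Y (t.1, t.2.2)).1, t.2.1, (Y (t.1, t.2.2)).2)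

/-- Action of a map `Y : X² → X²` on factors 2,3 of `X³`. -/
def act23 {X : Type*} (Y : X × X → X × X) (t : X × X × X) : X × X × X :=
  (t.1, (Y (t.2.1, t.2.2)).1, (Y (t.2.1, t.2.2)).2)

/-- The Adler map satisfies the parametric Yang–Baxter equation
`Y¹²_{a,b} ∘ Y¹³_{a,c} ∘ Y²³_{b,c} = Y²³_{b,c} ∘ Y¹³_{a,c} ∘ Y¹²_{a,b}`
on the domain where all occurring denominators are nonzero. -/
theorem adler_yang_baxter {K : Type*} [Field K] (a b c : K) (t : K × K × K)
    -- denominators along the left-hand side composition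
    (h1 : t.2.1 + t.2.2 ≠ 0)
    (h2 : (act23 (adler b c) t).1 + (act23 (adler b c) t).2.2 ≠ 0)
    (h3 : (act13 (adler a c) (act23 (adler b c) t)).1
          + (act13 (adler a c) (act23 (adler b c) t)).2.1 ≠ 0)
    -- denominators along the right-hand side composition
    (h4 : t.1 + t.2.1 ≠ 0)
    (h5 : (act12 (adler a b) t).1 + (act12 (adler a b) t).2.2 ≠ 0)
    (h6 : (act13 (adler a c) (act12 (adler a b) t)).2.1
          + (act13 (adler a c) (act12 (adler a b) t)).2.2 ≠ 0) :
    act12 (adler a b) (act13 (adler a c) (act23 (adler b c) t))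
      = act23 (adler b c) (act13 (adler a c) (act12 (adler a b) t)) := by
  obtain ⟨x, y, z⟩ := t
  simp only [adler, act12, act13, act23] at *
  have g3 := h3
  have g6 := h6
  field_simp at h2 h5
  replace h2 := (div_ne_zero_iff.mp h2).1
  replace h5 := (div_ne_zero_iff.mp h5).1
  field_simp at h3 h6
  replace h3 := (div_ne_zero_iff.mp h3).1
  replace h6 := (div_ne_zero_iff.mp h6).1
  obtain ⟨N2, hN2⟩ : ∃ N, x * (y + z) + (y * (y + z) + (b - c)) = N := ⟨_, rfl⟩
  obtain ⟨N5, hN5⟩ : ∃ N, y * (x + y) - (a - b) + z * (x + y) = N := ⟨_, rfl⟩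
  rw [hN2] at h2
  rw [hN5] at h5
  obtain ⟨M3, hM3⟩ : ∃ M, N2 - (a - c) = M := ⟨_, rfl⟩
  obtain ⟨M6, hM6⟩ : ∃ M, N5 + (a - c) = M := ⟨_, rfl⟩
  have e1 : x + (y + (b - c) / (y + z)) = N2 / (y + z) := by
    rw [eq_div_iff h1]; linear_combination div_mul_cancel₀ (b - c) h1 + hN2
  have e3 : y + (b - c) / (y + z) - (a - c) * (y + z) / N2 + (z - (b - c) / (y + z))
      = (y + z) * M3 / N2 := by
    rw [eq_div_iff h2]
    linear_combination (-1 : K) * div_mul_cancel₀ ((a - c) * (y + z)) h2 + (y + z) * hM3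
  have e5 : y - (a - b) / (x + y) + z = N5 / (x + y) := by
    rw [eq_div_iff h4]; linear_combination hN5 - div_mul_cancel₀ (a - b) h4
  have e6 : x + (a - b) / (x + y) + (y - (a - b) / (x + y) + (a - c) * (x + y) / N5)
      = (x + y) * M6 / N5 := by
    rw [eq_div_iff h5]
    linear_combination div_mul_cancel₀ ((a - c) * (x + y)) h5 + (x + y) * hM6
  rw [e1, div_div_eq_mul_div (a - c) _ (y + z), e3] at g3
  rw [e5, div_div_eq_mul_div (a - c) _ (x + y), e6] at g6
  have k3 : M3 ≠ 0 := by
    intro h; apply g3; rw [h]; simp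
  have k6 : M6 ≠ 0 := by
    intro h; apply g6; rw [h]; simp
  rw [e1, div_div_eq_mul_div (a - c) _ (y + z), e3, div_div_eq_mul_div (a - b) _ _,
    e5, div_div_eq_mul_div (a - c) _ (x + y), e6, div_div_eq_mul_div (b - c) _ _]
  refine Prod.ext ?_ (Prod.ext ?_ ?_) <;> field_simp <;> subst hM3 hM6 hN2 hN5 <;> ring
end

section
/- The noncommutative Boussinesq-type map Y₂ satisfies the Lax refactorisation equation L(u₁,u₂,u₃,u₄,a)·L(v₁,v₂,v₃,v₄,b) = L(y₁,y₂,y₃,y₄,b)·L(x₁,x₂,x₃,x₄,a) for all λ. -/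
/-!
With `D = y₄ - x₁ - x₂y₃` and `k = (a - b)D⁻¹`, the map `Y₂` shifts `y₁, y₂` by `-kx₂, k` and
`x₃, x₄` by `k, y₃k`. The refactorisation only needs `Dk = kD = a - b` with `k` commuting with
`b` and `λ`: comparing the two products entrywise, the (2,1) and (3,2) entries are these two
equations, and the (3,1) entry follows from them together with `k(a - b) = kDk = (a - b)k`.
-/

/-- The Boussinesq Lax matrix `L(x₁,x₂,x₃,x₄,a,λ)` over a division ring `R`. -/
def LB {R : Type*} [DivisionRing R] (x1 x2 x3 x4 a lam : R) :
    Matrix (Fin 3) (Fin 3) R :=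
  !![-x3, 1, 0;
     -x4, 0, 1;
     a - x1 * x3 - x2 * x4 - lam, x1, x2]

theorem LB_mul_LB {R : Type*} [DivisionRing R] (y1 y2 y3 y4 b x1 x2 x3 x4 a lam : R) :
    LB y1 y2 y3 y4 b lam * LB x1 x2 x3 x4 a lam =
      !![y3 * x3 - x4, -y3, 1;
         y4 * x3 + (a - x1 * x3 - x2 * x4 - lam), x1 - y4, x2;
         -(b - y1 * y3 - y2 * y4 - lam) * x3 - y1 * x4 + y2 * (a - x1 * x3 - x2 * x4 - lam),
           (b - y1 * y3 - y2 * y4 - lam) + y2 * x1, y1 + y2 * x2] := by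
  rw [LB, LB, Matrix.mul_fin_three]
  simp only [EmbeddingLike.apply_eq_iff_eq, Matrix.vecCons_inj, and_true]
  refine ⟨⟨?_, ?_, ?_⟩, ⟨?_, ?_, ?_⟩, ⟨?_, ?_, ?_⟩⟩ <;> noncomm_ring

theorem LB_shift_mul_LB_shift {R : Type*} [DivisionRing R]
    (a b lam x1 x2 x3 x4 y1 y2 y3 y4 k : R)
    (hbk : b * k = k * b) (hlamk : lam * k = k * lam)
    (hDk : (y4 - x1 - x2 * y3) * k = a - b) (hkD : k * (y4 - x1 - x2 * y3) = a - b) :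
    LB (y1 - k * x2) (y2 + k) y3 y4 a lam * LB x1 x2 (x3 + k) (x4 + y3 * k) b lam
      = LB y1 y2 y3 y4 b lam * LB x1 x2 x3 x4 a lam := by
  rw [LB_mul_LB, LB_mul_LB]
  simp only [EmbeddingLike.apply_eq_iff_eq, Matrix.vecCons_inj, and_true]
  refine ⟨?_, ?_, ?_, ?_, ?_⟩
  · noncomm_ring
  · linear_combination (norm := noncomm_ring) hDk
  · linear_combination (norm := noncomm_ring) hlamk - hbk + hkD * x3 + y2 * hDk + hkD * k
  · linear_combination (norm := noncomm_ring) -hkD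
  · noncomm_ring

/-- The noncommutative Boussinesq-type map `Y₂` (over a division ring `R`,
with `a, b, λ` central and `D = y₄ - x₁ - x₂y₃` invertible) satisfies the Lax
refactorisation `L(u,a) L(v,b) = L(y,b) L(x,a)` for all central `λ`. -/
theorem Y2_lax_refactorisation {R : Type*} [DivisionRing R]
    (a b x1 x2 x3 x4 y1 y2 y3 y4 : R)
    (ha : ∀ r : R, a * r = r * a) (hb : ∀ r : R, b * r = r * b)
    (hD : y4 - x1 - x2 * y3 ≠ 0)
    (u1 u2 u3 u4 v1 v2 v3 v4 : R)
    (hu1 : u1 = y1 - (a - b) * (y4 - x1 - x2 * y3)⁻¹ * x2)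
    (hu2 : u2 = y2 + (a - b) * (y4 - x1 - x2 * y3)⁻¹)
    (hu3 : u3 = y3)
    (hu4 : u4 = y4)
    (hv1 : v1 = x1)
    (hv2 : v2 = x2)
    (hv3 : v3 = x3 + (a - b) * (y4 - x1 - x2 * y3)⁻¹)
    (hv4 : v4 = x4 + (a - b) * y3 * (y4 - x1 - x2 * y3)⁻¹) :
    ∀ lam : R, (∀ r : R, lam * r = r * lam) →
      LB u1 u2 u3 u4 a lam * LB v1 v2 v3 v4 b lam
        = LB y1 y2 y3 y4 b lam * LB x1 x2 x3 x4 a lam := by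
  intro lam hlam
  subst u1 u2 u3 u4 v1 v2 v3 v4
  set D := y4 - x1 - x2 * y3
  have hc : ∀ r : R, (a - b) * r = r * (a - b) := fun r => by rw [sub_mul, mul_sub, ha, hb]
  have hy3k : (a - b) * y3 * D⁻¹ = y3 * ((a - b) * D⁻¹) := by rw [hc, mul_assoc]
  rw [hy3k]
  apply LB_shift_mul_LB_shift
  · exact hb _
  · exact hlam _
  · rw [← mul_assoc, ← hc, mul_assoc, mul_inv_cancel₀ hD, mul_one]
  · rw [mul_assoc, inv_mul_cancel₀ hD, mul_one]
end

section
/- The noncommutative Boussinesq-type map Y₂ is noninvolutive: there exist inputs with a ≠ b for which Y₂(Y₂(x,y)) ≠ (x,y). Specifically, the fourth coordinate of the first component of Y₂∘Y₂ equals x₄ + (a-b)y₃D⁻¹ with D = y₄ - x₁ - x₂y₃, which differs from x₄ whenever a ≠ b and y₃ ≠ 0. -/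
/-- The noncommutative Boussinesq-type map `Y₂` on `R⁴ × R⁴`,
`((x₁,x₂,x₃,x₄),(y₁,y₂,y₃,y₄)) ↦ ((u₁,u₂,u₃,u₄),(v₁,v₂,v₃,v₄))`, where
`D = y₄ - x₁ - x₂y₃`. -/
def Y2 {R : Type*} [DivisionRing R] (a b : R)
    (p : (R × R × R × R) × (R × R × R × R)) : (R × R × R × R) × (R × R × R × R) :=
  let x := p.1; let y := p.2
  let D := y.2.2.2 - x.1 - x.2.1 * y.2.2.1
  ((y.1 - (a - b) * D⁻¹ * x.2.1,
    y.2.1 + (a - b) * D⁻¹,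
    y.2.2.1,
    y.2.2.2),
   (x.1,
    x.2.1,
    x.2.2.1 + (a - b) * D⁻¹,
    x.2.2.2 + (a - b) * y.2.2.1 * D⁻¹))

section Y2

variable {R : Type*} [DivisionRing R] (a b : R) (p : (R × R × R × R) × (R × R × R × R))

theorem Y2_fst_snd_snd_snd : (Y2 a b p).1.2.2.2 = p.2.2.2.2 := rfl

theorem Y2_snd_snd_snd_snd :
    (Y2 a b p).2.2.2.2
      = p.1.2.2.2 + (a - b) * p.2.2.2.1 * (p.2.2.2.2 - p.1.1 - p.1.2.1 * p.2.2.2.1)⁻¹ :=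
  rfl

end Y2

theorem Y2_noninvolutive_general {R : Type*} [DivisionRing R] (a b : R)
    (x y : R × R × R × R)
    (hD : y.2.2.2 - x.1 - x.2.1 * y.2.2.1 ≠ 0)
    (hab : a ≠ b) (hy3 : y.2.2.1 ≠ 0) :
    (Y2 a b (Y2 a b (x, y))).1.2.2.2
        = x.2.2.2 + (a - b) * y.2.2.1 * (y.2.2.2 - x.1 - x.2.1 * y.2.2.1)⁻¹
      ∧ (Y2 a b (Y2 a b (x, y))).1.2.2.2 ≠ x.2.2.2
      ∧ Y2 a b (Y2 a b (x, y)) ≠ (x, y) := by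
  have hx4 : (Y2 a b (Y2 a b (x, y))).1.2.2.2
      = x.2.2.2 + (a - b) * y.2.2.1 * (y.2.2.2 - x.1 - x.2.1 * y.2.2.1)⁻¹ := by
    rw [Y2_fst_snd_snd_snd, Y2_snd_snd_snd_snd]
  have hshift : (a - b) * y.2.2.1 * (y.2.2.2 - x.1 - x.2.1 * y.2.2.1)⁻¹ ≠ 0 :=
    mul_ne_zero (mul_ne_zero (sub_ne_zero.mpr hab) hy3) (inv_ne_zero hD)
  have hne : (Y2 a b (Y2 a b (x, y))).1.2.2.2 ≠ x.2.2.2 := hx4 ▸ add_ne_left.mpr hshift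
  exact ⟨hx4, hne, fun h => hne (congrArg (fun q => q.1.2.2.2) h)⟩

/-- `Y₂` is noninvolutive: the fourth coordinate of the first component of
`Y₂ ∘ Y₂` equals `x₄ + (a-b) y₃ D⁻¹` with `D = y₄ - x₁ - x₂y₃`, which differs
from `x₄` whenever `a ≠ b` and `y₃ ≠ 0`; in particular `Y₂(Y₂(x,y)) ≠ (x,y)`. -/
theorem Y2_noninvolutive {R : Type*} [DivisionRing R] (a b : R)
    (ha : ∀ r : R, a * r = r * a) (hb : ∀ r : R, b * r = r * b)
    (x y : R × R × R × R)
    (hD : y.2.2.2 - x.1 - x.2.1 * y.2.2.1 ≠ 0)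
    (hab : a ≠ b) (hy3 : y.2.2.1 ≠ 0) :
    (Y2 a b (Y2 a b (x, y))).1.2.2.2
        = x.2.2.2 + (a - b) * y.2.2.1 * (y.2.2.2 - x.1 - x.2.1 * y.2.2.1)⁻¹
      ∧ (Y2 a b (Y2 a b (x, y))).1.2.2.2 ≠ x.2.2.2
      ∧ Y2 a b (Y2 a b (x, y)) ≠ (x, y) :=
  Y2_noninvolutive_general a b x y hD hab hy3
end

section
/- If p, q, r satisfy the noncommutative Boussinesq lattice system, then the conservation law q₁₁q₀₁ - r₀₁ - p₁₀ - q₁₀q = q₁₁q₁₀ - r₁₀ - p₀₁ - q₀₁q holds. -/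
/-! Writing `S = p + q q₁₁ - r₁₁` and `c = b - a`, the lattice equations say that the
increments of `q`, `r`, `p` are `c S⁻¹`, `c q₁₁ S⁻¹` and `-S⁻¹ c q`. The difference of the two
sides of the conservation law is a combination of these increments which reduces to
`(q₁₁ c - c q₁₁) S⁻¹ + (c S⁻¹ - S⁻¹ c) q`, and this vanishes because `c` is central. -/

theorem conservation_law_of_increments {R : Type*} [Ring R]
    {c u q q11 p01 p10 q01 q10 r01 r10 : R}
    (hcq : Commute c q11) (hcu : Commute c u)
    (hp : p01 - p10 = -(u * c * q)) (hq : q01 - q10 = c * u) (hr : r01 - r10 = c * q11 * u) :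
    q11 * q01 - r01 - p10 - q10 * q = q11 * q10 - r10 - p01 - q01 * q := by
  rw [← sub_eq_zero]
  calc q11 * q01 - r01 - p10 - q10 * q - (q11 * q10 - r10 - p01 - q01 * q)
      = q11 * (q01 - q10) - (r01 - r10) + (p01 - p10) + (q01 - q10) * q := by noncomm_ring
    _ = (q11 * c - c * q11) * u + (c * u - u * c) * q := by rw [hp, hq, hr]; noncomm_ring
    _ = 0 := by rw [hcq.eq, hcu.eq, sub_self, sub_self, zero_mul, zero_mul, add_zero]

theorem boussinesq_conservation_law_general {R : Type*} [DivisionRing R]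
    (a b p q p10 p01 q10 q01 q11 r10 r01 r11 : R)
    (ha : ∀ s : R, a * s = s * a) (hb : ∀ s : R, b * s = s * b)
    (hS : p + q * q11 - r11 ≠ 0)
    (e1 : (p + q * q11 - r11) * (p01 - p10) = (a - b) * q)
    (e2 : (q01 - q10) * (p + q * q11 - r11) = b - a)
    (e3 : (r01 - r10) * (p + q * q11 - r11) = (b - a) * q11) :
    q11 * q01 - r01 - p10 - q10 * q = q11 * q10 - r10 - p01 - q01 * q := by
  set S := p + q * q11 - r11
  have hc : ∀ s : R, Commute (b - a) s := fun s => Commute.sub_left (hb s) (ha s)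
  refine conservation_law_of_increments (hc q11) (hc S⁻¹) ?_
    ((eq_mul_inv_iff_mul_eq₀ hS).mpr e2) ((eq_mul_inv_iff_mul_eq₀ hS).mpr e3)
  rw [(eq_inv_mul_iff_mul_eq₀ hS).mpr e1, ← neg_sub b a]
  noncomm_ring

/-- If `p, q, r` satisfy the noncommutative Boussinesq lattice system
`(p + q q₁₁ - r₁₁)(p₀₁ - p₁₀) = (a-b) q`,
`(q₀₁ - q₁₀)(p + q q₁₁ - r₁₁) = b - a`,
`(r₀₁ - r₁₀)(p + q q₁₁ - r₁₁) = (b-a) q₁₁`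
(with `p + q q₁₁ - r₁₁` invertible and `a, b` central), then the conservation
law `q₁₁q₀₁ - r₀₁ - p₁₀ - q₁₀q = q₁₁q₁₀ - r₁₀ - p₀₁ - q₀₁q` holds. -/
theorem boussinesq_conservation_law {R : Type*} [DivisionRing R]
    (a b p q r p10 p01 q10 q01 q11 r10 r01 r11 : R)
    (ha : ∀ s : R, a * s = s * a) (hb : ∀ s : R, b * s = s * b)
    (hS : p + q * q11 - r11 ≠ 0)
    (e1 : (p + q * q11 - r11) * (p01 - p10) = (a - b) * q)
    (e2 : (q01 - q10) * (p + q * q11 - r11) = b - a)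
    (e3 : (r01 - r10) * (p + q * q11 - r11) = (b - a) * q11) :
    q11 * q01 - r01 - p10 - q10 * q = q11 * q10 - r10 - p01 - q01 * q :=
  boussinesq_conservation_law_general a b p q p10 p01 q10 q01 q11 r10 r01 r11 ha hb hS e1 e2 e3
end

section
/- The noncommutative NLS-type map T_{a,b,c} is noninvolutive: the composition T ∘ T sends z₂ to z₂ + y₂x₁ + c⁻¹(z₂x₂ + y₂(a + x₁x₂))(b·x₁ - y₁z₂), which in general differs from z₂ (e.g. it differs whenever y₂x₁ + c⁻¹(z₂x₂ + y₂(a + x₁x₂))(b·x₁ - y₁z₂) ≠ 0). -/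
/-- The noncommutative NLS-type map `T_{a,b,c} : R⁶ → R⁶`,
`(x₁,x₂,y₁,y₂,z₁,z₂) ↦ (u₁,u₂,v₁,v₂,w₁,w₂)`. -/
def Tmap {R : Type*} [DivisionRing R] (a b c : R)
    (p : R × R × R × R × R × R) : R × R × R × R × R × R :=
  let x1 := p.1; let x2 := p.2.1; let y1 := p.2.2.1; let y2 := p.2.2.2.1
  let z1 := p.2.2.2.2.1; let z2 := p.2.2.2.2.2
  ((b * x1 - y1 * z2) * c⁻¹,
   a * c * (z1 * y2 * (a + x1 * x2) + (c + z1 * z2) * x2)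
     * (a * b * c + (y1 * (c + z2 * z1) - b * x1 * z1)
         * (y2 * (a + x1 * x2) + z2 * x2))⁻¹,
   (y1 * (c + z2 * z1) - b * x1 * z1) * (a * c)⁻¹,
   z2 * x2 + y2 * (a + x1 * x2),
   z1 - (z1 * y2 * (a + x1 * x2) + (c + z1 * z2) * x2)
     * (y2 * (a + x1 * x2) + z2 * x2
         + a * b * c * (y1 * (c + z2 * z1) - b * x1 * z1)⁻¹)⁻¹,
   z2 + y2 * x1)

section Components

variable {R : Type*} [DivisionRing R] (a b c : R) (p : R × R × R × R × R × R)

theorem Tmap_fst : (Tmap a b c p).1 = (b * p.1 - p.2.2.1 * p.2.2.2.2.2) * c⁻¹ := rfl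

theorem Tmap_snd_snd_snd_fst :
    (Tmap a b c p).2.2.2.1 = p.2.2.2.2.2 * p.2.1 + p.2.2.2.1 * (a + p.1 * p.2.1) := rfl

theorem Tmap_snd_snd_snd_snd_snd :
    (Tmap a b c p).2.2.2.2.2 = p.2.2.2.2.2 + p.2.2.2.1 * p.1 := rfl

end Components

theorem Tmap_noninvolutive_general {R : Type*} [DivisionRing R]
    (a b c x1 x2 y1 y2 z1 z2 : R)
    (hc : ∀ r : R, c * r = r * c)
    (h : y2 * x1 + c⁻¹ * (z2 * x2 + y2 * (a + x1 * x2)) * (b * x1 - y1 * z2) ≠ 0) :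
    (Tmap a b c (Tmap a b c (x1, x2, y1, y2, z1, z2))).2.2.2.2.2
        = z2 + y2 * x1
          + c⁻¹ * (z2 * x2 + y2 * (a + x1 * x2)) * (b * x1 - y1 * z2)
      ∧ (Tmap a b c (Tmap a b c (x1, x2, y1, y2, z1, z2))).2.2.2.2.2 ≠ z2 := by
  have hcinv : ∀ r : R, c⁻¹ * r = r * c⁻¹ := fun r => Commute.inv_left₀ (hc r)
  -- `w₂` of `T ∘ T` is `w₂ + v₂ u₁` of `T`; the central factor `c⁻¹` of `u₁` moves to the front.
  have hz2 : (Tmap a b c (Tmap a b c (x1, x2, y1, y2, z1, z2))).2.2.2.2.2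
      = z2 + y2 * x1 + c⁻¹ * (z2 * x2 + y2 * (a + x1 * x2)) * (b * x1 - y1 * z2) := by
    rw [Tmap_snd_snd_snd_snd_snd, Tmap_snd_snd_snd_snd_snd, Tmap_snd_snd_snd_fst, Tmap_fst,
      ← hcinv, ← mul_assoc, ← hcinv]
  refine ⟨hz2, ?_⟩
  rw [hz2, add_assoc]
  exact add_ne_left.mpr h

/-- The noncommutative NLS-type map `T_{a,b,c}` is noninvolutive: `T ∘ T` sends
`z₂` to `z₂ + y₂x₁ + c⁻¹(z₂x₂ + y₂(a + x₁x₂))(bx₁ - y₁z₂)`, which differs from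
`z₂` whenever `y₂x₁ + c⁻¹(z₂x₂ + y₂(a + x₁x₂))(bx₁ - y₁z₂) ≠ 0`. -/
theorem Tmap_noninvolutive {R : Type*} [DivisionRing R]
    (a b c x1 x2 y1 y2 z1 z2 : R)
    (ha : ∀ r : R, a * r = r * a) (hb : ∀ r : R, b * r = r * b)
    (hc : ∀ r : R, c * r = r * c)
    (ha0 : a ≠ 0) (hb0 : b ≠ 0) (hc0 : c ≠ 0)
    (h : y2 * x1 + c⁻¹ * (z2 * x2 + y2 * (a + x1 * x2)) * (b * x1 - y1 * z2) ≠ 0) :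
    (Tmap a b c (Tmap a b c (x1, x2, y1, y2, z1, z2))).2.2.2.2.2
        = z2 + y2 * x1
          + c⁻¹ * (z2 * x2 + y2 * (a + x1 * x2)) * (b * x1 - y1 * z2)
      ∧ (Tmap a b c (Tmap a b c (x1, x2, y1, y2, z1, z2))).2.2.2.2.2 ≠ z2 :=
  Tmap_noninvolutive_general a b c x1 x2 y1 y2 z1 z2 hc h
end
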